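/- arXiv:2412.05196 — 2 statements merged into one kernel-verified Lean document; each statement's English description precedes it below -/
import Mathlib

section
/- Consider a √LTS run with cost function c^r and rerooting weights (w_t), and suppose node n_T is visited at step T with c^r(n_t) < ∞ for all t ≤ T. Then T ≤ 1 + Σ_{i < T} w_i · max_{i < t ≤ T} c^r(n_t). -/
open scoped ENNReal NNReal Classical

/-- A rooted tree: a parent map with a root that every node reaches after finitely
many applications of the parent map. -/
structure ParentTree (N : Type*) where
  root : N
  par : N → N
  par_root : par root = root
  reaches_root : ∀ n : N, ∃ k : ℕ, par^[k] n = root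

namespace ParentTree

variable {N : Type*}

/-- `t.anc n m` means `n` is an ancestor of `m` (possibly `n = m`). -/
def anc (t : ParentTree N) (n m : N) : Prop := ∃ k : ℕ, t.par^[k] m = n

/-- `t.sanc n m` means `n` is a strict ancestor of `m`. -/
def sanc (t : ParentTree N) (n m : N) : Prop := t.anc n m ∧ n ≠ m

/-- The set of children of a node. -/
def children (t : ParentTree N) (n : N) : Set N := {m | m ≠ t.root ∧ t.par m = n}

/-- The depth of a node: the least `k` with `par^[k] n = root`. -/
noncomputable def depth (t : ParentTree N) (n : N) : ℕ := sInf {k : ℕ | t.par^[k] n = t.root}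

/-- The distance from an ancestor `n` to `m`: the least `k` with `par^[k] m = n`. -/
noncomputable def dist (t : ParentTree N) (n m : N) : ℕ := sInf {k : ℕ | t.par^[k] m = n}

end ParentTree

/-- A policy: conditional probabilities `π(m | par m)` on nodes, summing to at most 1
over the children of any node. -/
structure Policy {N : Type*} (t : ParentTree N) where
  cond : N → ℝ
  cond_nonneg : ∀ m : N, 0 ≤ cond m
  cond_le_one : ∀ m : N, cond m ≤ 1
  sum_le_one : ∀ (n : N) (s : Finset N), ↑s ⊆ t.children n → ∑ m ∈ s, cond m ≤ 1

namespace Policy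

variable {N : Type*} {t : ParentTree N}

/-- The relative path probability `π(n | na)` as an extended nonnegative real:
the product of the conditional probabilities along the path from `na` (excluded) to `n`. -/
noncomputable def relProbE (P : Policy t) (na n : N) : ℝ≥0∞ :=
  ∏ j ∈ Finset.range (t.dist na n), ENNReal.ofReal (P.cond (t.par^[j] n))

/-- The rooted slenderness cost `Λ(n | na) = Σ_{na ⪯ n̄ ⪯ n} 1/π(n̄ | na)`, set to `∞`
when `na` is not an ancestor of `n`. -/
noncomputable def rootSlend (P : Policy t) (na n : N) : ℝ≥0∞ :=
  if t.anc na n then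
    ∑ k ∈ Finset.range (t.dist na n + 1), (P.relProbE na (t.par^[k] n))⁻¹
  else ⊤

end Policy

/-- The √LTS cost function `c^r` determined by a run (`visit`, `Q`) and rerooting weights
`w`: `c^r(root) = 1` and, for `n ≠ root`, `c^r(n)` is the infimum over all steps `s ≥ 1` at
which a node is visited with `visit s ≺ n` of `(Λ(n | visit s) − 1)/w s`
(with the convention `x/0 = ∞`). -/
noncomputable def runCost {N : Type*} (t : ParentTree N) (P : Policy t)
    (visit : ℕ → N) (Q : ℕ → Set N) (w : ℕ → ℝ≥0) (n : N) : ℝ≥0∞ :=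
  if n = t.root then 1
  else ⨅ s ∈ {s : ℕ | 1 ≤ s ∧ (Q s).Nonempty ∧ t.sanc (visit s) n},
    (P.rootSlend (visit s) n - 1) / (w s : ℝ≥0∞)

/-- A √LTS run: a best-first-search enumeration whose cost function is the `runCost`
defined from the run itself and the rerooting weights `w`. -/
def IsRootLTS {N : Type*} (t : ParentTree N) (P : Policy t)
    (visit : ℕ → N) (Q : ℕ → Set N) (w : ℕ → ℝ≥0) : Prop :=
  Q 1 = {t.root} ∧
  (∀ s : ℕ, 1 ≤ s → (Q s).Nonempty →
      visit s ∈ Q s ∧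
      (∀ n ∈ Q s, runCost t P visit Q w (visit s) ≤ runCost t P visit Q w n) ∧
      Q (s + 1) = (Q s \ {visit s}) ∪ t.children (visit s)) ∧
  (∀ s : ℕ, 1 ≤ s → Q s = ∅ → Q (s + 1) = ∅) ∧
  (∀ s s' : ℕ, 1 ≤ s → 1 ≤ s' → (Q s).Nonempty → (Q s').Nonempty →
      visit s = visit s' → s = s')

/-!
Charge every step `1 < s ≤ T` to a rerooting step `i < s` attaining the infimum that defines
`c^r(n_s)`, so that `Λ(n_s | n_i) ≤ 1 + w_i · max_{i<t≤T} c^r(n_t)`. The steps charged to `i`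
visit distinct strict descendants of `n_i`, and a finite set `S` of descendants of a node `a`
has at most `max_{n ∈ S} Λ(n | a)` elements: below a child `b` of `a` one has
`Λ(n | a) - 1 = Λ(n | b) / π(b | a)`, and the `π(b | a)` sum to at most one. Summing the charges
over `i` bounds `T - 1`.
-/

open Finset

theorem Finset.card_le_sum_card_filter_of_forall_exists {ι κ : Type*} [DecidableEq ι]
    {A : Finset ι} {B : Finset κ} {R : ι → κ → Prop} [∀ s i, Decidable (R s i)]
    (h : ∀ s ∈ A, ∃ i ∈ B, R s i) : #A ≤ ∑ i ∈ B, #{s ∈ A | R s i} := by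
  refine (card_le_card fun s hs => ?_).trans card_biUnion_le
  obtain ⟨i, hi, hR⟩ := h s hs
  exact mem_biUnion.2 ⟨i, hi, mem_filter.2 ⟨hs, hR⟩⟩

namespace ParentTree

variable {N : Type*} (t : ParentTree N) {a b n : N}

theorem iterate_par_root (k : ℕ) : t.par^[k] t.root = t.root :=
  Function.iterate_fixed t.par_root k

theorem eq_root_of_isPeriodicPt {k : ℕ} (hk : 0 < k) {x : N}
    (h : Function.IsPeriodicPt t.par k x) : x = t.root := by
  obtain ⟨K, hK⟩ := t.reaches_root x
  have hKk : K ≤ k * K := Nat.le_mul_of_pos_left K hk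
  calc x = t.par^[k * K] x := (h.mul_const K).eq.symm
    _ = t.par^[k * K - K] (t.par^[K] x) := by
      rw [← Function.iterate_add_apply, Nat.sub_add_cancel hKk]
    _ = t.root := by rw [hK, iterate_par_root]

theorem eq_root_of_anc_root (h : t.anc a t.root) : a = t.root := by
  obtain ⟨k, hk⟩ := h
  rw [← hk, iterate_par_root]

theorem anc_par_of_sanc (h : t.sanc a n) : t.anc a (t.par n) := by
  obtain ⟨⟨k, hk⟩, hne⟩ := h
  cases k with
  | zero => exact absurd hk.symm hne
  | succ k => exact ⟨k, by rwa [Function.iterate_succ_apply] at hk⟩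

theorem iterate_par_dist (h : t.anc a n) : t.par^[t.dist a n] n = a :=
  Nat.sInf_mem h

theorem dist_self (a : N) : t.dist a a = 0 :=
  Nat.sInf_eq_zero.2 (Or.inl rfl)

theorem dist_eq_add_one_of_par (hb : t.par b = a) (hbr : b ≠ t.root) (hbn : t.anc b n) :
    t.dist a n = t.dist b n + 1 := by
  have he := t.iterate_par_dist hbn
  have ha : t.par^[t.dist b n + 1] n = a := by rw [Function.iterate_succ_apply', he, hb]
  refine le_antisymm (Nat.sInf_le ha) (Nat.succ_le_of_lt (lt_of_not_ge fun hle => hbr ?_))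
  -- otherwise `a` reaches `b` and then itself again, so `a` would lie on a cycle
  have hab : t.par^[t.dist b n - t.dist a n] a = b :=
    calc t.par^[t.dist b n - t.dist a n] a
        = t.par^[t.dist b n - t.dist a n] (t.par^[t.dist a n] n) := by
          rw [t.iterate_par_dist ⟨_, ha⟩]
      _ = b := by rw [← Function.iterate_add_apply, Nat.sub_add_cancel hle, he]
  have hroot : a = t.root := t.eq_root_of_isPeriodicPt (Nat.succ_pos _) <| by
    rw [Function.IsPeriodicPt, Function.IsFixedPt, Function.iterate_succ_apply', hab, hb]
  rw [← hab, hroot, iterate_par_root]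

theorem par_iterate_dist_sub_one (h : t.anc a n) (hna : n ≠ a) :
    t.par (t.par^[t.dist a n - 1] n) = a ∧ t.par^[t.dist a n - 1] n ≠ t.root := by
  have hpos : 0 < t.dist a n :=
    Nat.pos_of_ne_zero fun h0 => hna (by simpa [h0] using t.iterate_par_dist h)
  have hpar : t.par (t.par^[t.dist a n - 1] n) = a := by
    rw [← Function.iterate_succ_apply' t.par, Nat.succ_eq_add_one, Nat.sub_add_cancel hpos,
      t.iterate_par_dist h]
  refine ⟨hpar, fun hroot => ?_⟩
  have hmin : t.dist a n ≤ t.dist a n - 1 :=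
    Nat.sInf_le (show t.par^[t.dist a n - 1] n = a by rw [hroot, ← hpar, hroot, t.par_root])
  omega

end ParentTree

namespace Policy

variable {N : Type*} {t : ParentTree N} (P : Policy t) {a b n : N}

theorem sum_ofReal_cond_le_one {s : Finset N} (hs : ↑s ⊆ t.children n) :
    ∑ m ∈ s, ENNReal.ofReal (P.cond m) ≤ 1 := by
  rw [← ENNReal.ofReal_sum_of_nonneg fun m _ => P.cond_nonneg m, ← ENNReal.ofReal_one]
  exact ENNReal.ofReal_le_ofReal (P.sum_le_one n s hs)

theorem relProbE_ne_top (a n : N) : P.relProbE a n ≠ ⊤ :=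
  ENNReal.prod_ne_top fun _ _ => ENNReal.ofReal_ne_top

theorem relProbE_self (a : N) : P.relProbE a a = 1 := by
  simp [relProbE, t.dist_self]

theorem relProbE_of_par (hb : t.par b = a) (hbr : b ≠ t.root) (hbn : t.anc b n) :
    P.relProbE a n = P.relProbE b n * ENNReal.ofReal (P.cond b) := by
  rw [relProbE, relProbE, t.dist_eq_add_one_of_par hb hbr hbn, prod_range_succ,
    t.iterate_par_dist hbn]

theorem rootSlend_self (a : N) : P.rootSlend a a = 1 := by
  simp [rootSlend, show t.anc a a from ⟨0, rfl⟩, t.dist_self, relProbE_self]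

theorem one_le_rootSlend (h : t.anc a n) : 1 ≤ P.rootSlend a n := by
  rw [rootSlend, if_pos h]
  calc (1 : ℝ≥0∞) = (P.relProbE a (t.par^[t.dist a n] n))⁻¹ := by
        rw [t.iterate_par_dist h, relProbE_self, inv_one]
    _ ≤ _ := single_le_sum (f := fun k => (P.relProbE a (t.par^[k] n))⁻¹)
        (fun _ _ => zero_le) (self_mem_range_succ _)

theorem rootSlend_sub_one_of_par (hb : t.par b = a) (hbr : b ≠ t.root) (hbn : t.anc b n) :
    P.rootSlend a n - 1 = (ENNReal.ofReal (P.cond b))⁻¹ * P.rootSlend b n := by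
  have he := t.iterate_par_dist hbn
  have ha : t.par^[t.dist b n + 1] n = a := by rw [Function.iterate_succ_apply', he, hb]
  have hterm : ∀ k ∈ range (t.dist b n + 1), (P.relProbE a (t.par^[k] n))⁻¹ =
      (ENNReal.ofReal (P.cond b))⁻¹ * (P.relProbE b (t.par^[k] n))⁻¹ := by
    intro k hk
    have hbk : t.anc b (t.par^[k] n) := ⟨t.dist b n - k, by
      rw [← Function.iterate_add_apply, Nat.sub_add_cancel (mem_range_succ_iff.1 hk), he]⟩
    rw [P.relProbE_of_par hb hbr hbk, mul_comm,
      ENNReal.mul_inv (Or.inr (P.relProbE_ne_top _ _)) (Or.inl ENNReal.ofReal_ne_top)]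
  rw [rootSlend, rootSlend, if_pos ⟨_, ha⟩, if_pos hbn, t.dist_eq_add_one_of_par hb hbr hbn,
    sum_range_succ, ha, relProbE_self, inv_one, sum_congr rfl hterm, ← mul_sum,
    ENNReal.add_sub_cancel_right ENNReal.one_ne_top]

theorem rootSlend_le_of_par {L : ℝ≥0∞} (hb : t.par b = a) (hbr : b ≠ t.root)
    (hbn : t.anc b n) (hL : L ≠ ⊤) (h : P.rootSlend a n ≤ L) :
    P.rootSlend b n ≤ ENNReal.ofReal (P.cond b) * (L - 1) := by
  have hdiv : (ENNReal.ofReal (P.cond b))⁻¹ * P.rootSlend b n ≤ L - 1 := by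
    rw [← P.rootSlend_sub_one_of_par hb hbr hbn]
    exact tsub_le_tsub_right h 1
  have hpb : ENNReal.ofReal (P.cond b) ≠ 0 := fun h0 => by
    rw [h0, ENNReal.inv_zero, ENNReal.top_mul (one_pos.trans_le (P.one_le_rootSlend hbn)).ne',
      top_le_iff] at hdiv
    exact ENNReal.sub_ne_top hL hdiv
  exact (ENNReal.inv_mul_le_iff hpb ENNReal.ofReal_ne_top).1 hdiv

theorem card_le_of_rootSlend_le_of_dist_le (M : ℕ) {L : ℝ≥0∞} {S : Finset N}
    (hS : ∀ n ∈ S, t.anc a n ∧ t.dist a n ≤ M) (hL : ∀ n ∈ S, P.rootSlend a n ≤ L) :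
    (#S : ℝ≥0∞) ≤ L := by
  induction M generalizing a L S with
  | zero =>
    have hsub : S ⊆ {a} := fun n hn => by
      simpa [Nat.le_zero.1 (hS n hn).2] using t.iterate_par_dist (hS n hn).1
    rcases S.eq_empty_or_nonempty with rfl | ⟨n₀, hn₀⟩
    · simp
    calc (#S : ℝ≥0∞) ≤ 1 := by exact_mod_cast (card_le_card hsub).trans (card_singleton a).le
      _ ≤ P.rootSlend a n₀ := P.one_le_rootSlend (hS n₀ hn₀).1
      _ ≤ L := hL n₀ hn₀
  | succ M ih =>
    rcases S.eq_empty_or_nonempty with rfl | ⟨n₀, hn₀⟩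
    · simp
    have hL1 : 1 ≤ L := (P.one_le_rootSlend (hS n₀ hn₀).1).trans (hL n₀ hn₀)
    by_cases hLtop : L = ⊤
    · simp [hLtop]
    set f : N → N := fun n => t.par^[t.dist a n - 1] n
    have hf : ∀ n ∈ S.erase a, t.par (f n) = a ∧ f n ≠ t.root := fun n hn =>
      t.par_iterate_dist_sub_one (hS n (mem_of_mem_erase hn)).1 (ne_of_mem_erase hn)
    have hfanc : ∀ n, t.anc (f n) n := fun n => ⟨_, rfl⟩
    have hchildren : ↑((S.erase a).image f) ⊆ t.children a := by
      intro b hb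
      obtain ⟨n, hn, rfl⟩ := mem_image.1 hb
      exact ⟨(hf n hn).2, (hf n hn).1⟩
    have hfiber : ∀ b ∈ (S.erase a).image f,
        (#{n ∈ S.erase a | f n = b} : ℝ≥0∞) ≤ ENNReal.ofReal (P.cond b) * (L - 1) := by
      intro b hb
      obtain ⟨n₁, hn₁, rfl⟩ := mem_image.1 hb
      refine ih (a := f n₁) (fun n hn => ?_) (fun n hn => ?_) <;>
        obtain ⟨hn, hfn⟩ := mem_filter.1 hn <;> rw [← hfn]
      · have hdist := (hS n (mem_of_mem_erase hn)).2
        rw [t.dist_eq_add_one_of_par (hf n hn).1 (hf n hn).2 (hfanc n)] at hdist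
        exact ⟨hfanc n, by omega⟩
      · exact P.rootSlend_le_of_par (hf n hn).1 (hf n hn).2 (hfanc n) hLtop
          (hL n (mem_of_mem_erase hn))
    calc (#S : ℝ≥0∞) ≤ #(S.erase a) + 1 := by
          exact_mod_cast Nat.sub_le_iff_le_add.1 pred_card_le_card_erase
      _ = ∑ b ∈ (S.erase a).image f, (#{n ∈ S.erase a | f n = b} : ℝ≥0∞) + 1 := by
          rw [card_eq_sum_card_image f (S.erase a), Nat.cast_sum]
      _ ≤ ∑ b ∈ (S.erase a).image f, ENNReal.ofReal (P.cond b) * (L - 1) + 1 := by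
          gcongr with b hb
          exact hfiber b hb
      _ ≤ 1 * (L - 1) + 1 := by
          rw [← sum_mul]
          gcongr
          exact P.sum_ofReal_cond_le_one hchildren
      _ = L := by rw [one_mul, tsub_add_cancel_of_le hL1]

theorem card_le_of_rootSlend_le {L : ℝ≥0∞} {S : Finset N} (hanc : ∀ n ∈ S, t.anc a n)
    (hL : ∀ n ∈ S, P.rootSlend a n ≤ L) : (#S : ℝ≥0∞) ≤ L :=
  P.card_le_of_rootSlend_le_of_dist_le (S.sup (t.dist a))
    (fun n hn => ⟨hanc n hn, le_sup hn⟩) hL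

theorem card_le_of_sanc_of_rootSlend_le {B : ℝ≥0∞} {S : Finset N}
    (hS : ∀ n ∈ S, t.sanc a n ∧ P.rootSlend a n ≤ 1 + B) : (#S : ℝ≥0∞) ≤ B := by
  have haS : a ∉ S := fun ha => (hS a ha).1.2 rfl
  have hcard : (#(insert a S) : ℝ≥0∞) ≤ 1 + B := by
    refine P.card_le_of_rootSlend_le (a := a) (fun n hn => ?_) (fun n hn => ?_) <;>
      rcases mem_insert.1 hn with rfl | hn
    · exact ⟨0, rfl⟩
    · exact (hS n hn).1.1
    · exact P.rootSlend_self n ▸ le_self_add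
    · exact (hS n hn).2
  rw [card_insert_of_notMem haS, Nat.cast_succ, add_comm] at hcard
  exact (ENNReal.add_le_add_iff_left ENNReal.one_ne_top).1 hcard

end Policy

namespace IsRootLTS

variable {N : Type*} {t : ParentTree N} {P : Policy t} {visit : ℕ → N} {Q : ℕ → Set N}
  {w : ℕ → ℝ≥0}

theorem visit_one (hrun : IsRootLTS t P visit Q w) : visit 1 = t.root := by
  obtain ⟨hQ1, hstep, -, -⟩ := hrun
  simpa [hQ1] using (hstep 1 le_rfl (by simp [hQ1])).1

theorem nonempty_of_le (hrun : IsRootLTS t P visit Q w) {s T : ℕ} (hs : 1 ≤ s) (hsT : s ≤ T)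
    (hQT : (Q T).Nonempty) : (Q s).Nonempty := by
  induction T, hsT using Nat.le_induction with
  | base => exact hQT
  | succ T hsT ih =>
    exact ih (Set.nonempty_iff_ne_empty.2 fun hQ =>
      hQT.ne_empty (hrun.2.2.1 T (hs.trans hsT) hQ))

theorem injOn_visit (hrun : IsRootLTS t P visit Q w) {T : ℕ} (hQT : (Q T).Nonempty) :
    Set.InjOn visit (Set.Icc 1 T) := fun s hs s' hs' h =>
  hrun.2.2.2 s s' hs.1 hs'.1 (hrun.nonempty_of_le hs.1 hs.2 hQT)
    (hrun.nonempty_of_le hs'.1 hs'.2 hQT) h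

theorem exists_visit_eq_of_sanc (hrun : IsRootLTS t P visit Q w) {s : ℕ} (hs : 1 ≤ s)
    {n a : N} (hn : n ∈ Q s) (ha : t.sanc a n) :
    ∃ j, 1 ≤ j ∧ j < s ∧ (Q j).Nonempty ∧ visit j = a := by
  obtain ⟨hQ1, hstep, hempty, -⟩ := hrun
  induction s, hs using Nat.le_induction generalizing n a with
  | base =>
    rw [hQ1, Set.mem_singleton_iff] at hn
    subst hn
    exact absurd (t.eq_root_of_anc_root ha.1) ha.2
  | succ s hs ih =>
    by_cases hQs : (Q s).Nonempty
    · rw [(hstep s hs hQs).2.2] at hn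
      rcases hn with ⟨hn, -⟩ | ⟨-, hpar⟩
      · obtain ⟨j, hj1, hjs, hQj, hj⟩ := ih hn ha
        exact ⟨j, hj1, by omega, hQj, hj⟩
      · have hanc := t.anc_par_of_sanc ha
        rw [hpar] at hanc
        rcases eq_or_ne a (visit s) with rfl | has
        · exact ⟨s, hs, by omega, hQs, rfl⟩
        · obtain ⟨j, hj1, hjs, hQj, hj⟩ := ih (hstep s hs hQs).1 ⟨hanc, has⟩
          exact ⟨j, hj1, by omega, hQj, hj⟩
    · rw [hempty s hs (Set.not_nonempty_iff_eq_empty.1 hQs)] at hn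
      exact absurd hn (Set.notMem_empty n)

theorem lt_of_sanc_visit (hrun : IsRootLTS t P visit Q w) {i s : ℕ} (hi : 1 ≤ i) (hs : 1 ≤ s)
    (hQi : (Q i).Nonempty) (hQs : (Q s).Nonempty) (h : t.sanc (visit i) (visit s)) : i < s := by
  obtain ⟨j, hj1, hjs, hQj, hj⟩ := hrun.exists_visit_eq_of_sanc hs (hrun.2.1 s hs hQs).1 h
  rwa [hrun.2.2.2 i j hi hj1 hQi hQj hj.symm]

theorem visit_ne_root (hrun : IsRootLTS t P visit Q w) {s : ℕ} (hs : 1 < s)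
    (hQs : (Q s).Nonempty) : visit s ≠ t.root := fun h => by
  have hQ1 : (Q 1).Nonempty := by simp [hrun.1]
  have := hrun.2.2.2 s 1 hs.le le_rfl hQs hQ1 (h.trans hrun.visit_one.symm)
  omega

/-- The infimum defining `c^r(n_s)` ranges over the finitely many earlier steps, so a finite
cost is attained by some rerooting step `i < s`. -/
theorem exists_rootSlend_le (hrun : IsRootLTS t P visit Q w) {s : ℕ} (hs : 1 < s)
    (hQs : (Q s).Nonempty) (hc : runCost t P visit Q w (visit s) ≠ ⊤) :
    ∃ i, 1 ≤ i ∧ i < s ∧ t.sanc (visit i) (visit s) ∧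
      P.rootSlend (visit i) (visit s) ≤ 1 + w i * runCost t P visit Q w (visit s) := by
  set I := {i : ℕ | 1 ≤ i ∧ (Q i).Nonempty ∧ t.sanc (visit i) (visit s)}
  have hI : I ⊆ Set.Iio s := fun i ⟨hi, hQi, h⟩ => hrun.lt_of_sanc_visit hi hs.le hQi hQs h
  have hcost : runCost t P visit Q w (visit s) =
      ⨅ i ∈ I, (P.rootSlend (visit i) (visit s) - 1) / (w i : ℝ≥0∞) :=
    if_neg (hrun.visit_ne_root hs hQs)
  have hIne : I.Nonempty :=
    Set.nonempty_iff_ne_empty.2 fun hI => hc (by rw [hcost, hI, iInf_emptyset])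
  obtain ⟨i, ⟨hi, hQi, hsanc⟩, hmin⟩ := Set.exists_min_image I
    (fun i => (P.rootSlend (visit i) (visit s) - 1) / (w i : ℝ≥0∞))
    ((Set.finite_Iio s).subset hI) hIne
  have hle : (P.rootSlend (visit i) (visit s) - 1) / (w i : ℝ≥0∞) ≤
      runCost t P visit Q w (visit s) := by
    rw [hcost]
    exact le_iInf₂ hmin
  rw [ENNReal.div_le_iff_le_mul (Or.inr hc) (Or.inl ENNReal.coe_ne_top)] at hle
  refine ⟨i, hi, hI ⟨hi, hQi, hsanc⟩, hsanc, ?_⟩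
  calc P.rootSlend (visit i) (visit s) ≤ P.rootSlend (visit i) (visit s) - 1 + 1 := le_tsub_add
    _ ≤ runCost t P visit Q w (visit s) * w i + 1 := by gcongr
    _ = 1 + w i * runCost t P visit Q w (visit s) := by ring

end IsRootLTS

theorem stmt14_general {N : Type*} (t : ParentTree N)
    (P : Policy t)
    (visit : ℕ → N) (Q : ℕ → Set N) (w : ℕ → ℝ≥0)
    (hrun : IsRootLTS t P visit Q w)
    (T : ℕ) (hQT : (Q T).Nonempty)
    (hfinite : ∀ s : ℕ, 1 ≤ s → s ≤ T → runCost t P visit Q w (visit s) ≠ ⊤) :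
    (T : ℝ≥0∞) ≤ 1 + ∑ i ∈ Finset.Ico 1 T, (w i : ℝ≥0∞) *
      (Finset.Ioc i T).sup (fun s => runCost t P visit Q w (visit s)) := by
  set M : ℕ → ℝ≥0∞ := fun i => (Ioc i T).sup (fun s => runCost t P visit Q w (visit s))
  set R : ℕ → ℕ → Prop := fun s i => t.sanc (visit i) (visit s) ∧
    P.rootSlend (visit i) (visit s) ≤ 1 + w i * M i
  have hcover : ∀ s ∈ Ioc 1 T, ∃ i ∈ Ico 1 T, R s i := by
    intro s hs
    obtain ⟨hs1, hsT⟩ := mem_Ioc.1 hs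
    obtain ⟨i, hi, his, hsanc, hle⟩ := hrun.exists_rootSlend_le hs1
      (hrun.nonempty_of_le hs1.le hsT hQT) (hfinite s hs1.le hsT)
    refine ⟨i, mem_Ico.2 ⟨hi, by omega⟩, hsanc, hle.trans ?_⟩
    gcongr
    exact le_sup (f := fun s => runCost t P visit Q w (visit s)) (mem_Ioc.2 ⟨his, hsT⟩)
  have hfiber : ∀ i ∈ Ico 1 T, (#{s ∈ Ioc 1 T | R s i} : ℝ≥0∞) ≤ w i * M i := by
    intro i _
    have hinj : Set.InjOn visit ↑{s ∈ Ioc 1 T | R s i} := (hrun.injOn_visit hQT).mono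
      fun s hs => mem_Icc.1 (Ioc_subset_Icc_self (mem_filter.1 hs).1)
    rw [← card_image_of_injOn hinj]
    refine P.card_le_of_sanc_of_rootSlend_le (a := visit i) fun n hn => ?_
    obtain ⟨s, hs, rfl⟩ := mem_image.1 hn
    exact (mem_filter.1 hs).2
  calc (T : ℝ≥0∞) ≤ 1 + #(Ioc 1 T) := by
        rw [Nat.card_Ioc]; exact_mod_cast (by omega : T ≤ 1 + (T - 1))
    _ ≤ 1 + ∑ i ∈ Ico 1 T, (#{s ∈ Ioc 1 T | R s i} : ℝ≥0∞) := by
        gcongr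
        exact_mod_cast card_le_sum_card_filter_of_forall_exists hcover
    _ ≤ 1 + ∑ i ∈ Ico 1 T, (w i : ℝ≥0∞) * M i := by
        gcongr with i hi
        exact hfiber i hi

/-- `c^r` composition bound: if `n_T` is visited at step `T` of a √LTS run
and `c^r(n_t) < ∞` for all `t ≤ T`, then
`T ≤ 1 + Σ_{i<T} w_i · max_{i<t≤T} c^r(n_t)`. -/
theorem stmt14 {N : Type*} (t : ParentTree N) (hfin : ∀ n : N, (t.children n).Finite)
    (P : Policy t) (hpos : ∀ m : N, m ≠ t.root → 0 < P.cond m)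
    (visit : ℕ → N) (Q : ℕ → Set N) (w : ℕ → ℝ≥0)
    (hrun : IsRootLTS t P visit Q w)
    (T : ℕ) (hT : 1 ≤ T) (hQT : (Q T).Nonempty)
    (hfinite : ∀ s : ℕ, 1 ≤ s → s ≤ T → runCost t P visit Q w (visit s) ≠ ⊤) :
    (T : ℝ≥0∞) ≤ 1 + ∑ i ∈ Finset.Ico 1 T, (w i : ℝ≥0∞) *
      (Finset.Ioc i T).sup (fun s => runCost t P visit Q w (visit s)) :=
  stmt14_general t P visit Q w hrun T hQT hfinite
end

section
/- For all nodes n_a ⪯ n_b ⪯ n such that π(m | par m) > 0 for every node m with n_a ≺ m ⪯ n and π(n_a) > 0, π(n_b) > 0, the rooted slenderness cost telescopes: (Λ(n | n_a) − 1)/π(n_a) = (Λ(n_b | n_a) − 1)/π(n_a) + (Λ(n | n_b) − 1)/π(n_b). -/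
namespace Policy

variable {N : Type*} {t : ParentTree N}

/-- The path probability `π(n)`: the product of the conditional probabilities along the
path from the root to `n` (so `π(root) = 1` and `π(m) = π(m | par m)·π(par m)`). -/
noncomputable def pathProb (P : Policy t) (n : N) : ℝ :=
  ∏ k ∈ Finset.range (t.depth n), P.cond (t.par^[k] n)

end Policy

namespace Policy

variable {N : Type*} {t : ParentTree N}

/-- The relative path probability `π(n | na)`: the product of the conditional
probabilities along the path from `na` (excluded) to `n`. -/
noncomputable def relProb (P : Policy t) (na n : N) : ℝ :=
  ∏ j ∈ Finset.range (t.dist na n), P.cond (t.par^[j] n)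

/-- The rooted slenderness cost `Λ(n | na) = Σ_{na ⪯ n̄ ⪯ n} 1/π(n̄ | na)` (real-valued,
meaningful when `na` is an ancestor of `n`). -/
noncomputable def rootSlendR (P : Policy t) (na n : N) : ℝ :=
  ∑ k ∈ Finset.range (t.dist na n + 1), (P.relProb na (t.par^[k] n))⁻¹

end Policy

namespace ParentTree

variable {N : Type*}

lemma anc_antisymm (t : ParentTree N) {na nb : N}
    (h1 : t.anc na nb) (h2 : t.anc nb na) : na = nb := by
  obtain ⟨i, hi⟩ := h1
  obtain ⟨j, hj⟩ := h2
  rcases Nat.eq_zero_or_pos (i + j) with h0 | hp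
  · have hi0 : i = 0 := Nat.eq_zero_of_add_eq_zero_right h0
    simpa [hi0] using hi.symm
  · have hcyc : t.par^[i + j] na = na := by
      rw [Function.iterate_add_apply, hj, hi]
    obtain ⟨k, hk⟩ := t.reaches_root na
    have hroot : ∀ m, t.par^[m] t.root = t.root := fun m => Function.iterate_fixed t.par_root m
    have hfix : t.par^[(i+j) * k] na = na := by
      rw [Function.iterate_mul]
      exact Function.iterate_fixed hcyc k
    have hk' : k ≤ (i+j)*k := Nat.le_mul_of_pos_left k hp
    have hna : na = t.root := by
      calc na = t.par^[(i+j)*k] na := hfix.symm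
        _ = t.par^[(i+j)*k - k] (t.par^[k] na) := by
            rw [← Function.iterate_add_apply, Nat.sub_add_cancel hk']
        _ = t.root := by rw [hk, hroot]
    rw [← hj, hna, hroot]

lemma iterate_dist (t : ParentTree N) {na nb : N} (h : t.anc na nb) :
    t.par^[t.dist na nb] nb = na := Nat.sInf_mem h

lemma dist_self_s16 (t : ParentTree N) (na : N) : t.dist na na = 0 := by
  simp [dist, Nat.sInf_eq_zero]

lemma dist_add (t : ParentTree N) {na nb n : N} (hab : t.anc na nb) (hbn : t.anc nb n) :
    t.dist na n = t.dist na nb + t.dist nb n := by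
  set a := t.dist nb n with ha
  set b := t.dist na nb with hb
  have hA : t.par^[a] n = nb := t.iterate_dist hbn
  have hB : t.par^[b] nb = na := t.iterate_dist hab
  have hmem : t.par^[b + a] n = na := by
    rw [Function.iterate_add_apply, hA, hB]
  refine le_antisymm (Nat.sInf_le hmem) ?_
  have han : t.anc na n := ⟨b + a, hmem⟩
  have hm : t.par^[t.dist na n] n = na := t.iterate_dist han
  set m := t.dist na n with hmd
  rcases le_or_gt a m with hle | hlt
  · have : t.par^[m - a] nb = na := by
      rw [← hA, ← Function.iterate_add_apply, Nat.sub_add_cancel hle, hm]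
    have hb' : b ≤ m - a := Nat.sInf_le this
    omega
  · exfalso
    have : t.par^[a - m] na = nb := by
      rw [← hm, ← Function.iterate_add_apply, Nat.sub_add_cancel hlt.le, hA]
    have heq : na = nb := t.anc_antisymm hab ⟨a - m, this⟩
    have : a ≤ m := Nat.sInf_le (show t.par^[m] n = nb by rw [hm]; exact heq)
    omega

lemma anc_iterate (t : ParentTree N) {nb n : N} (hbn : t.anc nb n) {k : ℕ}
    (hk : k ≤ t.dist nb n) : t.anc nb (t.par^[k] n) := by
  refine ⟨t.dist nb n - k, ?_⟩
  rw [← Function.iterate_add_apply, Nat.sub_add_cancel hk, t.iterate_dist hbn]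

lemma dist_iterate (t : ParentTree N) {nb n : N} (hbn : t.anc nb n) {k : ℕ}
    (hk : k ≤ t.dist nb n) : t.dist nb (t.par^[k] n) = t.dist nb n - k := by
  have hmem : t.par^[t.dist nb n - k] (t.par^[k] n) = nb := by
    rw [← Function.iterate_add_apply, Nat.sub_add_cancel hk, t.iterate_dist hbn]
  refine le_antisymm (Nat.sInf_le hmem) ?_
  have hm : t.par^[t.dist nb (t.par^[k] n)] (t.par^[k] n) = nb :=
    t.iterate_dist ⟨_, hmem⟩
  set j := t.dist nb (t.par^[k] n) with hj
  have h1 : t.par^[j + k] n = nb := by rw [Function.iterate_add_apply, hm]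
  have h2 : t.dist nb n ≤ j + k := Nat.sInf_le h1
  omega


end ParentTree

namespace Policy

variable {N : Type*} {t : ParentTree N}

lemma relProb_self (P : Policy t) (na : N) : P.relProb na na = 1 := by
  simp [relProb, t.dist_self_s16]

lemma relProb_mul (P : Policy t) {na nb n : N} (hab : t.anc na nb) (hbn : t.anc nb n) :
    P.relProb na n = P.relProb nb n * P.relProb na nb := by
  unfold relProb
  rw [t.dist_add hab hbn, add_comm, Finset.prod_range_add]
  congr 1
  refine Finset.prod_congr rfl fun j _ => ?_
  congr 1
  rw [add_comm, Function.iterate_add_apply, t.iterate_dist hbn]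

lemma pathProb_eq_relProb_root (P : Policy t) (n : N) :
    P.pathProb n = P.relProb t.root n := rfl


end Policy

/-- telescoping: for nodes `n_a ⪯ n_b ⪯ n` with positive conditional
probabilities on the path from `n_a` (excluded) to `n` and positive `π(n_a)`, `π(n_b)`,
`(Λ(n|n_a) − 1)/π(n_a) = (Λ(n_b|n_a) − 1)/π(n_a) + (Λ(n|n_b) − 1)/π(n_b)`. -/
theorem stmt16 {N : Type*} (t : ParentTree N) (P : Policy t)
    (na nb n : N) (hab : t.anc na nb) (hbn : t.anc nb n)
    (hpos : ∀ m : N, t.sanc na m → t.anc m n → 0 < P.cond m)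
    (hpa : 0 < P.pathProb na) (hpb : 0 < P.pathProb nb) :
    (P.rootSlendR na n - 1) / P.pathProb na =
      (P.rootSlendR na nb - 1) / P.pathProb na +
        (P.rootSlendR nb n - 1) / P.pathProb nb := by
  set dab := t.dist na nb with hdab
  set dbn := t.dist nb n with hdbn
  have hAn : t.par^[dbn] n = nb := t.iterate_dist hbn
  have hB : t.par^[dab] nb = na := t.iterate_dist hab
  -- positivity of r := relProb na nb
  set r := P.relProb na nb with hr
  have hrpos : 0 < r := by
    rw [hr]
    unfold Policy.relProb
    apply Finset.prod_pos
    intro j hj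
    rw [Finset.mem_range] at hj
    refine hpos _ ⟨⟨dab - j, ?_⟩, ?_⟩ ⟨j + dbn, ?_⟩
    · rw [← Function.iterate_add_apply, Nat.sub_add_cancel hj.le, hB]
    · intro h
      have hm : j ∈ {k : ℕ | t.par^[k] nb = na} := h.symm
      have hle : t.dist na nb ≤ j := Nat.sInf_le hm
      omega
    · rw [Function.iterate_add_apply, hAn]
  -- path prob relation
  have hQPr : P.pathProb nb = r * P.pathProb na := by
    have hra : t.anc t.root na := t.reaches_root na
    rw [P.pathProb_eq_relProb_root, P.pathProb_eq_relProb_root,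
      P.relProb_mul hra hab]
  -- splitting the sum
  have hdist : t.dist na n + 1 = dbn + (dab + 1) := by
    rw [t.dist_add hab hbn]; omega
  have h2 : ∀ k ∈ Finset.range (dab + 1),
      (P.relProb na (t.par^[dbn + k] n))⁻¹ = (P.relProb na (t.par^[k] nb))⁻¹ := by
    intro k _
    rw [add_comm, Function.iterate_add_apply, hAn]
  have h1 : ∀ k ∈ Finset.range dbn,
      (P.relProb na (t.par^[k] n))⁻¹ = (P.relProb nb (t.par^[k] n))⁻¹ * r⁻¹ := by
    intro k hk
    rw [Finset.mem_range] at hk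
    rw [P.relProb_mul hab (t.anc_iterate hbn hk.le), mul_inv]
  have e1 : P.rootSlendR na n =
      (∑ k ∈ Finset.range dbn, (P.relProb nb (t.par^[k] n))⁻¹) * r⁻¹
        + P.rootSlendR na nb := by
    unfold Policy.rootSlendR
    rw [hdist, Finset.sum_range_add, Finset.sum_congr rfl h2, Finset.sum_congr rfl h1,
      ← Finset.sum_mul]
  have hlast : P.relProb nb (t.par^[dbn] n) = 1 := by rw [hAn, P.relProb_self]
  have e2 : ∑ k ∈ Finset.range dbn, (P.relProb nb (t.par^[k] n))⁻¹
      = P.rootSlendR nb n - 1 := by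
    have : P.rootSlendR nb n
        = (∑ k ∈ Finset.range dbn, (P.relProb nb (t.par^[k] n))⁻¹) + 1 := by
      unfold Policy.rootSlendR
      rw [Finset.sum_range_succ, hlast, inv_one]
    linarith
  rw [e1, e2, hQPr]
  have hP : P.pathProb na ≠ 0 := ne_of_gt hpa
  have hr0 : r ≠ 0 := ne_of_gt hrpos
  field_simp
  ring
end
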